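/- Let M be the bounded measurable functions ℝⁿ → [0,1] with sup metric, V(f) := G∘(K∗f) with G bounded Lipschitz and K ∈ L¹, and X_t(f) := [f + t·V(f)]_0^1. If F : M × [0,∞) → M is a flow forward tangent to X (i.e., lim_{h→0⁺} d_∞(F_{t+h}(f), X_h(F_t(f)))/h = 0), then writing f_t := F_t(f₀), for every x ∈ ℝⁿ and t ≥ 0 the pointwise forward derivative satisfies: d/dt⁺ f_t(x) = G((K∗f_t)(x)) if 0 < f_t(x) < 1; d/dt⁺ f_t(x) = min(G((K∗f_t)(x)), 0) if f_t(x) = 1; and d/dt⁺ f_t(x) = max(G((K∗f_t)(x)), 0) if f_t(x) = 0. -/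

import Mathlib

open MeasureTheory Filter Topology

noncomputable def clip (a b x : ℝ) : ℝ := min (max a x) b

noncomputable def conv {n : ℕ} (K f : (Fin n → ℝ) → ℝ) (x : Fin n → ℝ) : ℝ :=
  ∫ y, K (x - y) * f y

/-- The Lenia arc field `X_t(f) = [f + t·G(K∗f)]₀¹`. -/
noncomputable def leniaX {n : ℕ} (G : ℝ → ℝ) (K : (Fin n → ℝ) → ℝ)
    (t : ℝ) (f : (Fin n → ℝ) → ℝ) (x : Fin n → ℝ) : ℝ :=
  clip 0 1 (f x + t * G (conv K f x))

/-!
Tangency in the supremum metric gives, at each point `x`, `F_{t+h}(x) = X_h(F_t)(x) + o(h)`.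
Near `h = 0⁺` the clipped line `h ↦ [c + h v]₀¹` with `c = F_t(x)` is exactly linear: of
slope `v` when `0 < c < 1`, and of slope `min v 0` resp. `max v 0` when `c` sits on the
upper resp. lower end of `[0, 1]`. The one-sided difference quotient of `F_t(x)` therefore
converges to that slope.
-/

section Clip

variable {a b c : ℝ}

lemma clip_mem_Icc (hab : a ≤ b) (y : ℝ) : clip a b y ∈ Set.Icc a b :=
  ⟨le_min (le_max_left _ _) hab, min_le_right _ _⟩

lemma clip_eq_self {y : ℝ} (hy : y ∈ Set.Icc a b) : clip a b y = y := by
  rw [clip, max_eq_right hy.1, min_eq_left hy.2]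

lemma tendsto_add_mul_nhds_zero (c v : ℝ) :
    Tendsto (fun h : ℝ => c + h * v) (𝓝 0) (𝓝 c) :=
  (continuous_const.add (continuous_id.mul continuous_const)).tendsto' 0 c (by simp)

lemma eventually_clip_add_mul_of_mem_Ioo (hc : c ∈ Set.Ioo a b) (v : ℝ) :
    ∀ᶠ h in 𝓝 0, clip a b (c + h * v) = c + h * v := by
  filter_upwards [tendsto_add_mul_nhds_zero c v (Ioo_mem_nhds hc.1 hc.2)] with h hh
  exact clip_eq_self (Set.Ioo_subset_Icc_self hh)

lemma eventually_clip_add_mul_of_eq_right (hab : a < b) (hc : c = b) (v : ℝ) :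
    ∀ᶠ h in 𝓝[≥] 0, clip a b (c + h * v) = c + h * min v 0 := by
  subst hc
  filter_upwards [nhdsWithin_le_nhds (tendsto_add_mul_nhds_zero c v (Ioi_mem_nhds hab)),
    self_mem_nhdsWithin] with h (hlt : a < c + h * v) (hh : 0 ≤ h)
  rw [clip, max_eq_right hlt.le, mul_min_of_nonneg _ _ hh, mul_zero, ← min_add_add_left,
    add_zero]

lemma eventually_clip_add_mul_of_eq_left (hab : a < b) (hc : c = a) (v : ℝ) :
    ∀ᶠ h in 𝓝[≥] 0, clip a b (c + h * v) = c + h * max v 0 := by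
  subst hc
  filter_upwards [nhdsWithin_le_nhds (tendsto_add_mul_nhds_zero c v (Iio_mem_nhds hab)),
    self_mem_nhdsWithin] with h (hlt : c + h * v < b) (hh : 0 ≤ h)
  rw [clip, mul_max_of_nonneg _ _ hh, mul_zero, max_comm (h * v), ← max_add_add_left,
    add_zero, min_eq_left (max_le hab.le hlt.le)]

end Clip

lemma leniaX_mem_Icc {n : ℕ} (G : ℝ → ℝ) (K : (Fin n → ℝ) → ℝ) (t : ℝ)
    (f : (Fin n → ℝ) → ℝ) (x : Fin n → ℝ) : leniaX G K t f x ∈ Set.Icc 0 1 :=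
  clip_mem_Icc zero_le_one _

lemma tendsto_apply_div_of_tendsto_iSup_abs_div {ι : Type*} {f : ℝ → ι → ℝ}
    (hbdd : ∀ᶠ h in 𝓝[>] 0, BddAbove (Set.range fun i => |f h i|))
    (hf : Tendsto (fun h => (⨆ i, |f h i|) / h) (𝓝[>] 0) (𝓝 0)) (i : ι) :
    Tendsto (fun h => f h i / h) (𝓝[>] 0) (𝓝 0) := by
  refine squeeze_zero_norm' ?_ hf
  filter_upwards [hbdd, self_mem_nhdsWithin] with h hb (hh : 0 < h)
  rw [norm_div, Real.norm_eq_abs, Real.norm_eq_abs, abs_of_pos hh]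
  exact div_le_div_of_nonneg_right (le_ciSup hb i) hh.le

lemma tendsto_slope_of_eventually_eq_add_mul {ψ φ : ℝ → ℝ} {c w : ℝ}
    (herr : Tendsto (fun h => (ψ h - φ h) / h) (𝓝[>] 0) (𝓝 0))
    (hφ : ∀ᶠ h in 𝓝[>] 0, φ h = c + h * w) :
    Tendsto (fun h => (ψ h - c) / h) (𝓝[>] 0) (𝓝 w) := by
  refine (zero_add w ▸ herr.add_const w).congr' ?_
  filter_upwards [hφ, self_mem_nhdsWithin] with h hφh (hh : 0 < h)
  rw [hφh]
  field_simp
  ring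

theorem lenia_forward_derivative_general {n : ℕ} (G : ℝ → ℝ) (K : (Fin n → ℝ) → ℝ)
    (F : ℝ → (Fin n → ℝ) → ℝ)
    (hF01 : ∀ t, 0 ≤ t → ∀ x, F t x ∈ Set.Icc (0:ℝ) 1)
    (htangent : ∀ t, 0 ≤ t →
      Tendsto (fun h : ℝ => (⨆ x, |F (t + h) x - leniaX G K h (F t) x|) / h)
        (𝓝[>] 0) (𝓝 0)) :
    ∀ x, ∀ t, 0 ≤ t →
      ((0 < F t x → F t x < 1 →
        Tendsto (fun h : ℝ => (F (t + h) x - F t x) / h) (𝓝[>] 0)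
          (𝓝 (G (conv K (F t) x)))) ∧
      (F t x = 1 →
        Tendsto (fun h : ℝ => (F (t + h) x - F t x) / h) (𝓝[>] 0)
          (𝓝 (min (G (conv K (F t) x)) 0))) ∧
      (F t x = 0 →
        Tendsto (fun h : ℝ => (F (t + h) x - F t x) / h) (𝓝[>] 0)
          (𝓝 (max (G (conv K (F t) x)) 0)))) := by
  intro x t ht
  have hbdd : ∀ᶠ h in 𝓝[>] 0,
      BddAbove (Set.range fun y => |F (t + h) y - leniaX G K h (F t) y|) := by
    filter_upwards [self_mem_nhdsWithin] with h (hh : 0 < h)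
    refine ⟨1, ?_⟩
    rintro _ ⟨y, rfl⟩
    obtain ⟨hF0, hF1⟩ := hF01 (t + h) (by linarith) y
    obtain ⟨hX0, hX1⟩ := leniaX_mem_Icc G K h (F t) y
    exact abs_sub_le_of_nonneg_of_le hF0 hF1 hX0 hX1
  have herr := tendsto_apply_div_of_tendsto_iSup_abs_div hbdd (htangent t ht) x
  have key : ∀ w, (∀ᶠ h in 𝓝[≥] 0, leniaX G K h (F t) x = F t x + h * w) →
      Tendsto (fun h : ℝ => (F (t + h) x - F t x) / h) (𝓝[>] 0) (𝓝 w) := fun w hw =>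
    tendsto_slope_of_eventually_eq_add_mul herr
      (hw.filter_mono (nhdsWithin_mono _ Set.Ioi_subset_Ici_self))
  exact ⟨fun h0 h1 =>
      key _ (nhdsWithin_le_nhds (eventually_clip_add_mul_of_mem_Ioo ⟨h0, h1⟩ _)),
    fun h1 => key _ (eventually_clip_add_mul_of_eq_right one_pos h1 _),
    fun h0 => key _ (eventually_clip_add_mul_of_eq_left one_pos h0 _)⟩

theorem lenia_forward_derivative {n : ℕ} (G : ℝ → ℝ) (K : (Fin n → ℝ) → ℝ)
    (hK : Integrable K) (g CG : ℝ) (hGb : ∀ u, |G u| ≤ g)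
    (hGL : ∀ u v, |G u - G v| ≤ CG * |u - v|)
    (F : ℝ → (Fin n → ℝ) → ℝ)
    (hF01 : ∀ t, 0 ≤ t → ∀ x, F t x ∈ Set.Icc (0:ℝ) 1)
    (hFmeas : ∀ t, 0 ≤ t → Measurable (F t))
    (htangent : ∀ t, 0 ≤ t →
      Tendsto (fun h : ℝ => (⨆ x, |F (t + h) x - leniaX G K h (F t) x|) / h)
        (𝓝[>] 0) (𝓝 0)) :
    ∀ x, ∀ t, 0 ≤ t →
      ((0 < F t x → F t x < 1 →
        Tendsto (fun h : ℝ => (F (t + h) x - F t x) / h) (𝓝[>] 0)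
          (𝓝 (G (conv K (F t) x)))) ∧
      (F t x = 1 →
        Tendsto (fun h : ℝ => (F (t + h) x - F t x) / h) (𝓝[>] 0)
          (𝓝 (min (G (conv K (F t) x)) 0))) ∧
      (F t x = 0 →
        Tendsto (fun h : ℝ => (F (t + h) x - F t x) / h) (𝓝[>] 0)
          (𝓝 (max (G (conv K (F t) x)) 0)))) :=
  lenia_forward_derivative_general G K F hF01 htangent
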